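/- arXiv:1303.3789 — 2 statements merged into one kernel-verified Lean document; each statement's English description precedes it below -/
import Mathlib

section
/- Let S be a numerical semigroup with multiplicity e = m(S) and let x∈S be nonzero. If ord_S(x + jx) = ord_S(x) + ord_S(jx) for every j with 1 ≤ j ≤ e−1 (i.e. the initial form (t^x)* is a non-zero-divisor on the initial forms (t^{jx})* in the tangent cone), then x = ord_S(x)·e. -/
/-! Every element of `S ∖ {0}` is at least `m(S)`, so an element of `tM` is at least `t·m(S)`;
hence `ord(x)·m(S) ≤ x`. Conversely `m(S)·x` is a sum of `x` copies of `m(S)`, so its order is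
at least `x`, while the hypothesis makes `ord` additive along `x, 2x, …, m(S)·x`, giving
`ord(m(S)·x) = m(S)·ord(x)`. Together, `x ≤ ord(x)·m(S) ≤ x`. -/

open scoped Pointwise

/-- `S ⊆ ℕ` is a numerical semigroup: it contains `0`, is closed under
addition, and has finite complement in `ℕ`. -/
def IsNumSgp (S : Set ℕ) : Prop :=
  (0 : ℕ) ∈ S ∧ (∀ a ∈ S, ∀ b ∈ S, a + b ∈ S) ∧ {x : ℕ | x ∉ S}.Finite

/-- `nM S t` is the `t`-fold sumset of the maximal ideal `M = S \ {0}`,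
with the convention `nM S 0 = S`. -/
def nM (S : Set ℕ) : ℕ → Set ℕ
  | 0 => S
  | t + 1 => (S \ {0}) + nM S t

/-- the order of `s` with respect to `S` : the largest `t` with `s ∈ tM`. -/
noncomputable def ordS (S : Set ℕ) (s : ℕ) : ℕ := sSup {t : ℕ | s ∈ nM S t}

/-- the multiplicity of `S` : its least nonzero element. -/
noncomputable def mult (S : Set ℕ) : ℕ := sInf {x : ℕ | x ∈ S ∧ x ≠ 0}

/-- the Apéry set of `S` with respect to `x` : elements `s ∈ S` with `s - x ∉ S`. -/
def Ap (S : Set ℕ) (x : ℕ) : Set ℕ := {s : ℕ | s ∈ S ∧ ¬ ∃ t ∈ S, s = t + x}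

/-- membership of an integer in (the image in `ℤ` of) `S`. -/
def zmem (S : Set ℕ) (z : ℤ) : Prop := ∃ t ∈ S, (t : ℤ) = z

/-- the Frobenius number of `S` : the largest integer not in `S`. -/
noncomputable def Frob (S : Set ℕ) : ℤ := sSup {z : ℤ | ¬ zmem S z}

/-- `S` is symmetric: for every integer `z`, `z ∈ S` iff `F(S) - z ∉ S`. -/
def IsSymmetric (S : Set ℕ) : Prop := ∀ z : ℤ, zmem S z ↔ ¬ zmem S (Frob S - z)

/-- the set of maximal elements of `Ap S x` with respect to the order
`u ⪯ v` iff `v = u + z` for some `z ∈ S`. -/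
def MaxAp (S : Set ℕ) (x : ℕ) : Set ℕ :=
  {w : ℕ | w ∈ Ap S x ∧ ∀ y ∈ Ap S x, (∃ z ∈ S, y = w + z) → y = w}

/-- the set of maximal elements of `Ap S x` with respect to the order
`u ⪯_M v` iff `v = u + z` for some `z ∈ S` with `ord(v) = ord(u) + ord(z)`. -/
def MaxMAp (S : Set ℕ) (x : ℕ) : Set ℕ :=
  {w : ℕ | w ∈ Ap S x ∧ ∀ y ∈ Ap S x,
    (∃ z ∈ S, y = w + z ∧ ordS S y = ordS S w + ordS S z) → y = w}

/-- `S` is M-pure with respect to `x` : all maximal elements of `Ap S x`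
under `⪯_M` have the same order. -/
def MPureWrt (S : Set ℕ) (x : ℕ) : Prop :=
  ∀ w ∈ MaxMAp S x, ∀ w' ∈ MaxMAp S x, ordS S w = ordS S w'

/-- `S` is M-pure : it is M-pure with respect to its multiplicity. -/
def MPure (S : Set ℕ) : Prop := MPureWrt S (mult S)

/-- `β_i(x)` : the number of elements of `Ap S x` of order `i`. -/
noncomputable def betaS (S : Set ℕ) (x i : ℕ) : ℕ := {w ∈ Ap S x | ordS S w = i}.ncard

/-- `d(x)` : the maximal order of an element of `Ap S x`. -/
noncomputable def dS (S : Set ℕ) (x : ℕ) : ℕ := sSup (ordS S '' Ap S x)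

/-- the reduction number of `S` : the least `r` with `(r+1)M = m(S) + rM`. -/
noncomputable def redNum (S : Set ℕ) : ℕ :=
  sInf {r : ℕ | nM S (r + 1) = (fun y => mult S + y) '' nM S r}

/-- `l_x(S) = max { ord(s+x) - ord(x) - ord(s) : s ∈ S, ord(s) ≤ r }`. -/
noncomputable def lS (S : Set ℕ) (x : ℕ) : ℕ :=
  sSup {t : ℕ | ∃ s ∈ S, ordS S s ≤ redNum S ∧ t = ordS S (s + x) - ordS S x - ordS S s}

/-- the Hilbert function of `S`. -/
noncomputable def HilbS (S : Set ℕ) (t : ℕ) : ℕ := (nM S t \ nM S (t + 1)).ncard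

/-- The data of a gluing `S = ⟨q m₁, …, q m_d, p n₁, …, p n_k⟩` of two numerical
semigroups `S₁ = ⟨m₁, …, m_d⟩` and `S₂ = ⟨n₁, …, n_k⟩`, minimally generated by
`m₁ < ⋯ < m_d` and `n₁ < ⋯ < n_k`, where `p ∈ S₁ \ {m₁, …, m_d}`,
`q ∈ S₂ \ {n₁, …, n_k}` and `gcd(p, q) = 1`. -/
structure Gluing where
  d : ℕ
  k : ℕ
  hd : 0 < d
  hk : 0 < k
  m : Fin d → ℕ
  n : Fin k → ℕ
  p : ℕ
  q : ℕ
  hm : StrictMono m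
  hn : StrictMono n
  hmin₁ : ∀ i, m i ∉ AddSubmonoid.closure (Set.range m \ {m i})
  hmin₂ : ∀ j, n j ∉ AddSubmonoid.closure (Set.range n \ {n j})
  hnum₁ : IsNumSgp (AddSubmonoid.closure (Set.range m) : Set ℕ)
  hnum₂ : IsNumSgp (AddSubmonoid.closure (Set.range n) : Set ℕ)
  hp : p ∈ AddSubmonoid.closure (Set.range m)
  hq : q ∈ AddSubmonoid.closure (Set.range n)
  hpm : p ∉ Set.range m
  hqn : q ∉ Set.range n
  hpq : Nat.gcd p q = 1

/-- the numerical semigroup `S₁ = ⟨m₁, …, m_d⟩`. -/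
def Gluing.S₁ (G : Gluing) : Set ℕ := (AddSubmonoid.closure (Set.range G.m) : Set ℕ)

/-- the numerical semigroup `S₂ = ⟨n₁, …, n_k⟩`. -/
def Gluing.S₂ (G : Gluing) : Set ℕ := (AddSubmonoid.closure (Set.range G.n) : Set ℕ)

/-- the glued numerical semigroup `S = ⟨q m₁, …, q m_d, p n₁, …, p n_k⟩`. -/
def Gluing.S (G : Gluing) : Set ℕ :=
  (AddSubmonoid.closure
    ((fun x => G.q * x) '' Set.range G.m ∪ (fun x => G.p * x) '' Set.range G.n) : Set ℕ)

/-- the smallest generator `m₁` of `S₁`. -/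
def Gluing.m₁ (G : Gluing) : ℕ := G.m ⟨0, G.hd⟩

/-- the smallest generator `n₁` of `S₂`. -/
def Gluing.n₁ (G : Gluing) : ℕ := G.n ⟨0, G.hk⟩

/-- the gluing is specific if `ord_{S₂}(q) + l_q(S₂) ≤ ord_{S₁}(p)`. -/
def Gluing.Specific (G : Gluing) : Prop := ordS G.S₂ G.q + lS G.S₂ G.q ≤ ordS G.S₁ G.p

/-- the gluing is nice if `q = a n₁` for some `1 < a ≤ ord_{S₁}(p)`. -/
def Gluing.Nice (G : Gluing) : Prop := ∃ a : ℕ, 1 < a ∧ a ≤ ordS G.S₁ G.p ∧ G.q = a * G.n₁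

section NumericalSemigroupOrder

variable {S : Set ℕ}

theorem mult_mem_of_ne_zero {x : ℕ} (hx : x ∈ S) (hx0 : x ≠ 0) : mult S ∈ S ∧ mult S ≠ 0 :=
  Nat.sInf_mem (⟨x, hx, hx0⟩ : {y : ℕ | y ∈ S ∧ y ≠ 0}.Nonempty)

theorem mult_le_of_mem {a : ℕ} (ha : a ∈ S) (ha0 : a ≠ 0) : mult S ≤ a :=
  Nat.sInf_le ⟨ha, ha0⟩

theorem mul_le_of_mem_nM {c : ℕ} (hc : ∀ a ∈ S, a ≠ 0 → c ≤ a) :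
    ∀ {t s : ℕ}, s ∈ nM S t → t * c ≤ s
  | 0, _, _ => by simp
  | t + 1, _, ⟨a, ⟨ha, ha0⟩, b, hb, rfl⟩ => by
    have hca : c ≤ a := hc a ha ha0
    have htb : t * c ≤ b := mul_le_of_mem_nM hc hb
    simp only [add_mul, one_mul]
    omega

theorem mul_mult_le_of_mem_nM {t s : ℕ} (hs : s ∈ nM S t) : t * mult S ≤ s :=
  mul_le_of_mem_nM (fun _ ha ha0 => mult_le_of_mem ha ha0) hs

theorem le_of_mem_nM {t s : ℕ} (hs : s ∈ nM S t) : t ≤ s := by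
  simpa using mul_le_of_mem_nM (c := 1) (fun a _ ha0 => Nat.one_le_iff_ne_zero.mpr ha0) hs

theorem bddAbove_setOf_mem_nM (s : ℕ) : BddAbove {t : ℕ | s ∈ nM S t} :=
  ⟨s, fun _ ht => le_of_mem_nM ht⟩

theorem le_ordS_of_mem_nM {t s : ℕ} (hs : s ∈ nM S t) : t ≤ ordS S s :=
  le_csSup (bddAbove_setOf_mem_nM s) hs

theorem mem_nM_ordS {s : ℕ} (hs : s ∈ S) : s ∈ nM S (ordS S s) :=
  Nat.sSup_mem (⟨0, hs⟩ : {t : ℕ | s ∈ nM S t}.Nonempty) (bddAbove_setOf_mem_nM s)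

theorem ordS_mul_mult_le {s : ℕ} (hs : s ∈ S) : ordS S s * mult S ≤ s :=
  mul_mult_le_of_mem_nM (mem_nM_ordS hs)

theorem mul_mem_nM (h0 : 0 ∈ S) {a : ℕ} (ha : a ∈ S) (ha0 : a ≠ 0) :
    ∀ k : ℕ, k * a ∈ nM S k
  | 0 => by rw [zero_mul]; exact h0
  | k + 1 => ⟨a, ⟨ha, ha0⟩, k * a, mul_mem_nM h0 ha ha0 k, by ring⟩

theorem le_ordS_mul (h0 : 0 ∈ S) {a : ℕ} (ha : a ∈ S) (ha0 : a ≠ 0) (k : ℕ) :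
    k ≤ ordS S (k * a) :=
  le_ordS_of_mem_nM (mul_mem_nM h0 ha ha0 k)

theorem ordS_mul_eq_mul_ordS {x n : ℕ}
    (h : ∀ j : ℕ, 1 ≤ j → j ≤ n → ordS S (x + j * x) = ordS S x + ordS S (j * x)) :
    ∀ {j : ℕ}, 1 ≤ j → j ≤ n + 1 → ordS S (j * x) = j * ordS S x
  | 0, hj, _ => absurd hj (by norm_num)
  | 1, _, _ => by simp
  | j + 2, _, hjn => by
    rw [show (j + 2) * x = x + (j + 1) * x by ring, h (j + 1) (by omega) (by omega),
      ordS_mul_eq_mul_ordS h (by omega) (by omega)]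
    ring

end NumericalSemigroupOrder

/-- if `x ∈ S` is nonzero and `ord_S(x + jx) = ord_S(x) + ord_S(jx)`
for every `1 ≤ j ≤ e - 1` (i.e. `(t^x)*` is a non-zero-divisor on the initial forms
`(t^{jx})*`), then `x = ord_S(x)·e`, where `e = m(S)`. -/
theorem stmt1 (S : Set ℕ) (hS : IsNumSgp S) (x : ℕ) (hx : x ∈ S) (hx0 : x ≠ 0)
    (h : ∀ j : ℕ, 1 ≤ j → j ≤ mult S - 1 →
      ordS S (x + j * x) = ordS S x + ordS S (j * x)) :
    x = ordS S x * mult S := by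
  obtain ⟨he, he0⟩ := mult_mem_of_ne_zero hx hx0
  have hord : ordS S (mult S * x) = mult S * ordS S x :=
    ordS_mul_eq_mul_ordS h (Nat.one_le_iff_ne_zero.mpr he0) (by omega)
  have hupper : ordS S x * mult S ≤ x := ordS_mul_mult_le hx
  have hlower : x ≤ ordS S (x * mult S) := le_ordS_mul hS.1 he he0 x
  rw [mul_comm x, hord, mul_comm] at hlower
  omega
end

section
/- Let S = ⟨qm₁,…,qm_d, pn₁,…,pn_k⟩ be a gluing of S₁ and S₂ and let x∈S₁ be nonzero. Then: (1) AP(S, qx) = { qz₁ + pz₂ : z₁∈AP(S₁,x), z₂∈AP(S₂,q) }; (2) if qz₁ + pz₂ ∈ AP(S, qx) with z₁∈S₁ and z₂∈S₂, then z₁∈AP(S₁,x). -/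
open scoped Pointwise

/-!
Every element of the gluing `S` is `q a + p b` with `a ∈ S₁`, `b ∈ S₂`, and since `p ∈ S₁` one may
trade `q` in `b` for `p` in `a` until `b ∈ AP(S₂, q)`. If such an element with `a ∈ AP(S₁, x)`,
`b ∈ AP(S₂, q)` were `q x` plus an element `q a' + p b'` of `S`, coprimality of `p` and `q` would give
`a = a' + x + p c` and `b' = b + q c` for some integer `c`: for `c ≥ 0` this puts `a - x` in `S₁`,
for `c < 0` it puts `b - q` in `S₂`.
-/

theorem Nat.one_mem_of_one_mem_addSubmonoidClosure {T : Set ℕ}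
    (h : 1 ∈ AddSubmonoid.closure T) : 1 ∈ T := by
  suffices ∀ y ∈ AddSubmonoid.closure T, y = 1 → 1 ∈ T from this 1 h rfl
  intro y hy
  induction hy using AddSubmonoid.closure_induction with
  | mem z hz => rintro rfl; exact hz
  | zero => omega
  | add a b _ _ iha ihb =>
    intro hab
    rcases Nat.add_eq_one_iff.mp hab with ⟨-, hb⟩ | ⟨ha, -⟩
    · exact ihb hb
    · exact iha ha

theorem Nat.Coprime.exists_eq_add_mul_of_mul_add_mul_eq {p q u v u' v' : ℕ} (hpq : p.Coprime q)
    (hp : 0 < p) (h : q * u + p * v = q * u' + p * v') (hu : u' ≤ u) :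
    ∃ c, u = u' + p * c ∧ v' = v + q * c := by
  obtain ⟨e, rfl⟩ := Nat.exists_eq_add_of_le hu
  have hqe : q * e + p * v = p * v' := by linarith
  obtain ⟨c, rfl⟩ : p ∣ e := hpq.dvd_of_dvd_mul_left ⟨v' - v, by rw [Nat.mul_sub]; omega⟩
  refine ⟨c, rfl, Nat.eq_of_mul_eq_mul_left hp ?_⟩
  linarith

namespace AddSubmonoid

def glue (A B : AddSubmonoid ℕ) (p q : ℕ) : AddSubmonoid ℕ :=
  A.map (AddMonoidHom.mulLeft q) ⊔ B.map (AddMonoidHom.mulLeft p)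

variable {A B : AddSubmonoid ℕ} {p q : ℕ}

theorem mem_glue {u : ℕ} : u ∈ glue A B p q ↔ ∃ a ∈ A, ∃ b ∈ B, q * a + p * b = u := by
  simp only [glue, mem_sup, mem_map, AddMonoidHom.coe_mulLeft]
  constructor
  · rintro ⟨_, ⟨a, ha, rfl⟩, _, ⟨b, hb, rfl⟩, rfl⟩
    exact ⟨a, ha, b, hb, rfl⟩
  · rintro ⟨a, ha, b, hb, rfl⟩
    exact ⟨_, ⟨a, ha, rfl⟩, _, ⟨b, hb, rfl⟩, rfl⟩

theorem mul_add_mul_mem_glue {a b : ℕ} (ha : a ∈ A) (hb : b ∈ B) :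
    q * a + p * b ∈ glue A B p q :=
  mem_glue.mpr ⟨a, ha, b, hb, rfl⟩

theorem exists_mul_add_mul_eq_of_mem_ap (hp : p ∈ A) (hq : 0 < q) :
    ∀ b ∈ B, ∀ a ∈ A, ∃ a' ∈ A, ∃ b' ∈ Ap B q, q * a + p * b = q * a' + p * b' := by
  intro b
  induction b using Nat.strong_induction_on with
  | _ b ih =>
    intro hb a ha
    by_cases hbq : ∃ t ∈ B, b = t + q
    · obtain ⟨t, ht, rfl⟩ := hbq
      obtain ⟨a', ha', b', hb', he⟩ := ih t (by omega) ht (a + p) (add_mem ha hp)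
      exact ⟨a', ha', b', hb', by rw [← he]; ring⟩
    · exact ⟨a, ha, b, ⟨hb, hbq⟩, rfl⟩

theorem mul_add_mul_ne_of_mem_ap (hpq : p.Coprime q) (hp : p ∈ A) (hq : q ∈ B) (hp0 : 0 < p)
    {x z₁ z₂ a b : ℕ} (hz₁ : z₁ ∈ Ap A x) (hz₂ : z₂ ∈ Ap B q) (ha : a ∈ A) (hb : b ∈ B) :
    q * z₁ + p * z₂ ≠ q * (a + x) + p * b := by
  intro he
  rcases le_or_gt (a + x) z₁ with hle | hlt
  · obtain ⟨c, hc, -⟩ := hpq.exists_eq_add_mul_of_mul_add_mul_eq hp0 he hle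
    refine hz₁.2 ⟨a + p * c, add_mem ha ?_, by rw [hc]; ring⟩
    simpa [mul_comm] using nsmul_mem hp c
  · obtain ⟨c, hc, rfl⟩ := hpq.exists_eq_add_mul_of_mul_add_mul_eq hp0 he.symm hlt.le
    obtain _ | c := c
    · omega
    refine hz₂.2 ⟨b + q * c, add_mem hb ?_, by ring⟩
    simpa [mul_comm] using nsmul_mem hq c

theorem mem_ap_of_mul_add_mul_mem_ap_glue {x z₁ z₂ : ℕ} (hz₁ : z₁ ∈ A) (hz₂ : z₂ ∈ B)
    (h : q * z₁ + p * z₂ ∈ Ap (glue A B p q) (q * x)) : z₁ ∈ Ap A x := by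
  refine ⟨hz₁, ?_⟩
  rintro ⟨t, ht, rfl⟩
  exact h.2 ⟨q * t + p * z₂, mul_add_mul_mem_glue ht hz₂, by ring⟩

theorem ap_glue (hpq : p.Coprime q) (hp : p ∈ A) (hq : q ∈ B) (hp0 : 0 < p) (hq0 : 0 < q)
    (x : ℕ) :
    Ap (glue A B p q) (q * x) =
      {u | ∃ z₁ ∈ Ap A x, ∃ z₂ ∈ Ap B q, u = q * z₁ + p * z₂} := by
  ext u
  constructor
  · intro hu
    obtain ⟨a, ha, b, hb, rfl⟩ := mem_glue.mp hu.1
    obtain ⟨z₁, hz₁, z₂, hz₂, he⟩ := exists_mul_add_mul_eq_of_mem_ap hp hq0 b hb a ha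
    rw [he] at hu ⊢
    exact ⟨z₁, mem_ap_of_mul_add_mul_mem_ap_glue hz₁ hz₂.1 hu, z₂, hz₂, rfl⟩
  · rintro ⟨z₁, hz₁, z₂, hz₂, rfl⟩
    refine ⟨mul_add_mul_mem_glue hz₁.1 hz₂.1, ?_⟩
    rintro ⟨t, ht, he⟩
    obtain ⟨a, ha, b, hb, rfl⟩ := mem_glue.mp ht
    exact mul_add_mul_ne_of_mem_ap hpq hp hq hp0 hz₁ hz₂ ha hb (by rw [he]; ring)

end AddSubmonoid

namespace Gluing

theorem p_pos (G : Gluing) : 0 < G.p := by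
  refine Nat.pos_of_ne_zero fun hp => G.hqn ?_
  have hq : G.q = 1 := by simpa [hp] using G.hpq
  exact hq ▸ Nat.one_mem_of_one_mem_addSubmonoidClosure (hq ▸ G.hq)

theorem q_pos (G : Gluing) : 0 < G.q := by
  refine Nat.pos_of_ne_zero fun hq => G.hpm ?_
  have hp : G.p = 1 := by simpa [hq] using G.hpq
  exact hp ▸ Nat.one_mem_of_one_mem_addSubmonoidClosure (hp ▸ G.hp)

theorem S_eq_glue (G : Gluing) :
    G.S = AddSubmonoid.glue (.closure (Set.range G.m)) (.closure (Set.range G.n)) G.p G.q := by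
  simp only [Gluing.S, AddSubmonoid.glue, AddMonoidHom.map_mclosure, AddSubmonoid.closure_union,
    AddMonoidHom.coe_mulLeft]

end Gluing

theorem stmt8_general (G : Gluing) (x : ℕ) :
    (Ap G.S (G.q * x) =
      {u : ℕ | ∃ z₁ ∈ Ap G.S₁ x, ∃ z₂ ∈ Ap G.S₂ G.q, u = G.q * z₁ + G.p * z₂}) ∧
    (∀ z₁ ∈ G.S₁, ∀ z₂ ∈ G.S₂,
      G.q * z₁ + G.p * z₂ ∈ Ap G.S (G.q * x) → z₁ ∈ Ap G.S₁ x) := by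
  rw [G.S_eq_glue]
  exact ⟨AddSubmonoid.ap_glue G.hpq G.hp G.hq G.p_pos G.q_pos x,
    fun z₁ hz₁ z₂ hz₂ => AddSubmonoid.mem_ap_of_mul_add_mul_mem_ap_glue hz₁ hz₂⟩

/-- for a gluing `S` of `S₁` and `S₂` and nonzero `x ∈ S₁`:
(1) `AP(S, qx) = { qz₁ + pz₂ : z₁ ∈ AP(S₁,x), z₂ ∈ AP(S₂,q) }`;
(2) if `qz₁ + pz₂ ∈ AP(S, qx)` with `z₁ ∈ S₁`, `z₂ ∈ S₂`, then `z₁ ∈ AP(S₁,x)`. -/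
theorem stmt8 (G : Gluing) (x : ℕ) (hx : x ∈ G.S₁) (hx0 : x ≠ 0) :
    (Ap G.S (G.q * x) =
      {u : ℕ | ∃ z₁ ∈ Ap G.S₁ x, ∃ z₂ ∈ Ap G.S₂ G.q, u = G.q * z₁ + G.p * z₂}) ∧
    (∀ z₁ ∈ G.S₁, ∀ z₂ ∈ G.S₂,
      G.q * z₁ + G.p * z₂ ∈ Ap G.S (G.q * x) → z₁ ∈ Ap G.S₁ x) :=
  stmt8_general G x
end
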